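/- arXiv:1603.03161 — 5 statements merged into one kernel-verified Lean document; each statement's English description precedes it below -/
import Mathlib

section
/- Let U2 be any 2-dimensional subspace of W̄. Then λ̄ annihilates U2 (i.e. λ̄(u,u',w) = 0 for all u,u' ∈ U2 and all w ∈ W̄) if and only if U2 ∩ A1 ≠ 0 and U2 ∩ A2 ≠ 0; in that case both intersections are 1-dimensional and U2 = (U2 ∩ A1) ⊕ (U2 ∩ A2). (Set-theoretic form of the paper's Lemma on the zero locus of a general 3-form on Gr(2,6): this zero locus is P(A1) × P(A2).) -/
/-!
Since `λ̄1` vanishes as soon as one argument lies in `A1`, it is a 3-form on `W̄/A1 ≅ A2`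
pulled back along the projection. If `U2 ∩ A1 = 0`, this projection maps `U2` onto a plane of
`A2`; complete its image to a basis of `A2` by some `z ∈ A2`. As `λ̄2(u, u', z) = 0`, annihilation
gives `λ̄1(u, u', z) = 0`, so `λ̄1` vanishes on a basis of the 3-dimensional `A2`, hence `λ̄1 = 0`.
Conversely, if `U2` is spanned by `a ∈ A1` and `b ∈ A2`, then `λ̄(a, b, ·) = 0` term by term,
and bilinearity in the first two slots extends this to all of `U2`.
-/

open Module Submodule

namespace AlternatingMap

theorem map_eq_of_forall_sub_mem {R M N ι : Type*} [Fintype ι] [Ring R] [AddCommGroup M]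
    [Module R M] [AddCommGroup N] [Module R N] (f : M [⋀^ι]→ₗ[R] N) {A : Submodule R M}
    (hf : ∀ v : ι → M, (∃ i, v i ∈ A) → f v = 0) {v w : ι → M} (h : ∀ i, v i - w i ∈ A) :
    f v = f w := by
  classical
  -- in the multilinear expansion of `f (w + (v - w))`, every term but `f w` has a slot in `A`
  rw [← add_sub_cancel w v, f.map_add_univ, Finset.sum_eq_single Finset.univ]
  · simp
  · intro s _ hs
    obtain ⟨i, hi⟩ : ∃ i, i ∉ s := by simpa [Finset.eq_univ_iff_forall] using hs
    exact hf _ ⟨i, by simpa [hi] using h i⟩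
  · simp

theorem eq_zero_of_map_eq_zero_on_plane {k W : Type*} [Field k] [AddCommGroup W] [Module k W]
    {A B U : Submodule k W} (hBA : IsCompl B A) (hB : finrank k B = 3) (hU : finrank k U = 2)
    (hUA : Disjoint U A) (f : W [⋀^Fin 3]→ₗ[k] k)
    (hf : ∀ v : Fin 3 → W, (∃ i, v i ∈ A) → f v = 0)
    (hfU : ∀ u ∈ U, ∀ u' ∈ U, ∀ z ∈ B, f ![u, u', z] = 0) : f = 0 := by
  set p := B.projectionOnto A hBA
  have hf_proj (v : Fin 3 → W) : f v = f.compLinearMap B.subtype (p ∘ v) :=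
    f.map_eq_of_forall_sub_mem hf fun i => sub_projection_mem hBA (v i)
  suffices f.compLinearMap B.subtype = 0 by ext v; simp [hf_proj v, this]
  have hpU : LinearMap.ker (p ∘ₗ U.subtype) = ⊥ := by
    refine LinearMap.ker_eq_bot'.2 fun u hu => ?_
    have huA : (u : W) ∈ A := by simpa [p] using hu
    simpa using hUA.le_bot ⟨u.2, huA⟩
  have : Module.Finite k U := Module.finite_of_finrank_eq_succ hU
  set bU := finBasisOfFinrankEq k U hU
  have hli : LinearIndependent k ![p (bU 0), p (bU 1)] := by
    have h : ![p (bU 0), p (bU 1)] = (p ∘ₗ U.subtype) ∘ bU := by ext i; fin_cases i <;> rfl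
    exact h ▸ bU.linearIndependent.map' _ hpU
  obtain ⟨z, hz⟩ := exists_linearIndependent_snoc_of_lt_finrank hli (by omega)
  rw [← map_basis_eq_zero_iff (basisOfLinearIndependentOfCardEqFinrank hz (by simp [hB])),
    coe_basisOfLinearIndependentOfCardEqFinrank]
  convert hfU _ (bU 0).2 _ (bU 1).2 _ z.2 using 1
  rw [hf_proj]
  congr 1
  ext i; fin_cases i <;> simp [p]

variable {R M N : Type*} [CommRing R] [AddCommGroup M] [Module R M] [AddCommGroup N] [Module R N]

theorem map_vecCons_swap (f : M [⋀^Fin 3]→ₗ[R] N) (a b w : M) :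
    f ![b, a, w] = -f ![a, b, w] := by
  rw [← f.map_swap ![a, b, w] (i := 0) (j := 1) (by decide)]
  congr 1
  ext i
  fin_cases i <;> rfl

theorem map_eq_zero_of_mem_span_pair (f : M [⋀^Fin 3]→ₗ[R] N) {a b x y : M}
    (hab : ∀ w, f ![a, b, w] = 0) (hx : x ∈ span R {a, b}) (hy : y ∈ span R {a, b}) (w : M) :
    f ![x, y, w] = 0 := by
  obtain ⟨α, β, rfl⟩ := mem_span_pair.1 hx
  obtain ⟨γ, δ, rfl⟩ := mem_span_pair.1 hy
  simp only [← curryLeft_apply_apply, map_add, map_smul, add_apply, smul_apply, curryLeft_same,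
    zero_apply]
  simp only [curryLeft_apply_apply, map_vecCons_swap f a b, hab]
  simp

end AlternatingMap

namespace Submodule

variable {K V : Type*} [DivisionRing K] [AddCommGroup V] [Module K V]

theorem finrank_eq_one_and_sup_eq_of_finrank_eq_two {P Q U : Submodule K V}
    (hU : finrank K U = 2) (hPU : P ≤ U) (hQU : Q ≤ U) (hPQ : Disjoint P Q) (hP : P ≠ ⊥)
    (hQ : Q ≠ ⊥) : finrank K P = 1 ∧ finrank K Q = 1 ∧ P ⊔ Q = U := by
  have : FiniteDimensional K U := Module.finite_of_finrank_eq_succ hU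
  have : FiniteDimensional K P := finiteDimensional_of_le hPU
  have : FiniteDimensional K Q := finiteDimensional_of_le hQU
  have hsum := finrank_sup_add_finrank_inf_eq P Q
  rw [hPQ.eq_bot, finrank_bot, add_zero] at hsum
  have hle : P ⊔ Q ≤ U := sup_le hPU hQU
  have hPQU := finrank_mono hle
  have := one_le_finrank_iff.2 hP
  have := one_le_finrank_iff.2 hQ
  exact ⟨by omega, by omega, eq_of_le_of_finrank_le hle (by omega)⟩

end Submodule

theorem stmt_0_general (k : Type*) [Field k]
    (W : Type*) [AddCommGroup W] [Module k W]
    (A1 A2 : Submodule k W)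
    (hA12 : A1 ⊓ A2 = ⊥) (hA12' : A1 ⊔ A2 = ⊤)
    (hA1 : finrank k A1 = 3) (hA2 : finrank k A2 = 3)
    (lam1 lam2 : AlternatingMap k W k (Fin 3))
    (hlam1ne : lam1 ≠ 0) (hlam2ne : lam2 ≠ 0)
    (hlam1 : ∀ v : Fin 3 → W, (∃ i, v i ∈ A1) → lam1 v = 0)
    (hlam2 : ∀ v : Fin 3 → W, (∃ i, v i ∈ A2) → lam2 v = 0)
    (lam : AlternatingMap k W k (Fin 3)) (hlam : lam = lam1 + lam2)
    (U2 : Submodule k W) (hU2 : finrank k U2 = 2) :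
    ((∀ u ∈ U2, ∀ u' ∈ U2, ∀ w : W, lam ![u, u', w] = 0) ↔
      (U2 ⊓ A1 ≠ ⊥ ∧ U2 ⊓ A2 ≠ ⊥)) ∧
    ((∀ u ∈ U2, ∀ u' ∈ U2, ∀ w : W, lam ![u, u', w] = 0) →
      finrank k ↥(U2 ⊓ A1) = 1 ∧ finrank k ↥(U2 ⊓ A2) = 1 ∧
      (U2 ⊓ A1) ⊔ (U2 ⊓ A2) = U2) := by
  subst hlam
  have hA : IsCompl A1 A2 := ⟨disjoint_iff.2 hA12, codisjoint_iff.2 hA12'⟩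
  have hdisj : Disjoint (U2 ⊓ A1) (U2 ⊓ A2) := hA.disjoint.mono inf_le_right inf_le_right
  have hlines (h1 : U2 ⊓ A1 ≠ ⊥) (h2 : U2 ⊓ A2 ≠ ⊥) :=
    finrank_eq_one_and_sup_eq_of_finrank_eq_two hU2 inf_le_left inf_le_left hdisj h1 h2
  have key : (∀ u ∈ U2, ∀ u' ∈ U2, ∀ w, (lam1 + lam2) ![u, u', w] = 0) ↔
      (U2 ⊓ A1 ≠ ⊥ ∧ U2 ⊓ A2 ≠ ⊥) := by
    constructor
    · intro H
      refine ⟨fun h1 => hlam1ne ?_, fun h2 => hlam2ne ?_⟩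
      · refine AlternatingMap.eq_zero_of_map_eq_zero_on_plane hA.symm hA2 hU2 (disjoint_iff.2 h1)
          lam1 hlam1 fun u hu u' hu' z hz => ?_
        simpa [hlam2 ![u, u', z] ⟨2, hz⟩] using H u hu u' hu' z
      · refine AlternatingMap.eq_zero_of_map_eq_zero_on_plane hA hA1 hU2 (disjoint_iff.2 h2)
          lam2 hlam2 fun u hu u' hu' z hz => ?_
        simpa [hlam1 ![u, u', z] ⟨2, hz⟩] using H u hu u' hu' z
    · rintro ⟨h1, h2⟩ u hu u' hu' w
      obtain ⟨hP, hQ, hPQ⟩ := hlines h1 h2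
      obtain ⟨a, ha, ha0⟩ := exists_mem_ne_zero_of_ne_bot h1
      obtain ⟨b, hb, hb0⟩ := exists_mem_ne_zero_of_ne_bot h2
      have hspan : U2 = span k {a, b} := by
        rw [← hPQ, eq_span_singleton_of_mem_of_finrank_eq_one hP ha ha0,
          eq_span_singleton_of_mem_of_finrank_eq_one hQ hb hb0, span_insert]
      rw [hspan] at hu hu'
      refine (lam1 + lam2).map_eq_zero_of_mem_span_pair (fun w => ?_) hu hu' w
      simp [hlam1 ![a, b, w] ⟨0, ha.2⟩, hlam2 ![a, b, w] ⟨1, hb.2⟩]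
  exact ⟨key, fun H => hlines (key.1 H).1 (key.1 H).2⟩

/-- For a general 3-form `λ̄ = λ̄1 + λ̄2` on a 6-dimensional space
`W̄ = A1 ⊕ A2`, a 2-dimensional subspace `U2` is annihilated by `λ̄` iff it meets
both `A1` and `A2` nontrivially; in that case both intersections are lines and
`U2 = (U2 ⊓ A1) ⊕ (U2 ⊓ A2)`. -/
theorem stmt_0 (k : Type*) [Field k] [CharZero k]
    (W : Type*) [AddCommGroup W] [Module k W] [FiniteDimensional k W]
    (hW : finrank k W = 6)
    (A1 A2 : Submodule k W)
    (hA12 : A1 ⊓ A2 = ⊥) (hA12' : A1 ⊔ A2 = ⊤)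
    (hA1 : finrank k A1 = 3) (hA2 : finrank k A2 = 3)
    (lam1 lam2 : AlternatingMap k W k (Fin 3))
    (hlam1ne : lam1 ≠ 0) (hlam2ne : lam2 ≠ 0)
    (hlam1 : ∀ v : Fin 3 → W, (∃ i, v i ∈ A1) → lam1 v = 0)
    (hlam2 : ∀ v : Fin 3 → W, (∃ i, v i ∈ A2) → lam2 v = 0)
    (lam : AlternatingMap k W k (Fin 3)) (hlam : lam = lam1 + lam2)
    (U2 : Submodule k W) (hU2 : finrank k U2 = 2) :
    ((∀ u ∈ U2, ∀ u' ∈ U2, ∀ w : W, lam ![u, u', w] = 0) ↔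
      (U2 ⊓ A1 ≠ ⊥ ∧ U2 ⊓ A2 ≠ ⊥)) ∧
    ((∀ u ∈ U2, ∀ u' ∈ U2, ∀ w : W, lam ![u, u', w] = 0) →
      finrank k ↥(U2 ⊓ A1) = 1 ∧ finrank k ↥(U2 ⊓ A2) = 1 ∧
      (U2 ⊓ A1) ⊔ (U2 ⊓ A2) = U2) :=
  stmt_0_general k W A1 A2 hA12 hA12' hA1 hA2 lam1 lam2 hlam1ne hlam2ne hlam1 hlam2 lam hlam U2 hU2
end

section
/- Let μ be an alternating bilinear form on W̄ such that the induced pairing A1 × A2 → k, (a1,a2) ↦ μ(a1,a2), is nondegenerate. Then a 2-dimensional subspace U2 ⊆ W̄ satisfies both 'λ̄ annihilates U2' (λ̄(u,u',w) = 0 for all u,u' ∈ U2, w ∈ W̄) and 'μ vanishes on U2' (μ(u,u') = 0 for all u,u' ∈ U2) if and only if U2 = span{a1,a2} for some nonzero a1 ∈ A1 and a2 ∈ A2 with μ(a1,a2) = 0. Moreover, the map sending such a U2 to the pair (span{a1}, {a ∈ A1 : μ(a,a2) = 0}) is a bijection onto the set of full flags (1-dimensional subspace contained in a 2-dimensional subspace)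 in A1. (Set-theoretic form of the paper's Lemma identifying the zero locus of (λ̄,μ) on Gr(2,6) with the flag variety Fl(1,2;A1).) -/
/-!
Let `p : W̄ → A2` be the projection along `A1`. Since `λ̄1` vanishes as soon as one argument lies
in `A1`, it factors through `p`, so it restricts to a nonzero volume form on `A2`. If `λ̄`
annihilates a plane `U` with `U ∩ A1 = 0`, then `p U` is a plane of `A2` with
`λ̄1(p u, p u', z) = λ̄(u, u', z) = 0` for all `z ∈ A2`, which a volume form forbids. Hence `U`
meets `A1` and, symmetrically, `A2`, i.e. `U = ⟨a1, a2⟩`; conversely `λ̄(a1, a2, ·) = 0`.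

The flag attached to `⟨a1, a2⟩` is `(⟨a1⟩, A1 ∩ ker μ(·, a2))`, and `μ(·, a2)` is a nonzero
functional on `A1`. The hyperplane recovers `⟨a2⟩` since `A2 → A1*` is injective, and every plane
`P ⊆ A1` arises from a nonzero `a2` in the kernel of `A2 → P*`, which exists by counting dimensions.
-/

open Module Submodule

theorem LinearMap.IsAlt.eq_zero_of_mem_span_pair {R M N : Type*} [CommRing R] [AddCommGroup M]
    [Module R M] [AddCommGroup N] [Module R N] {B : M →ₗ[R] M →ₗ[R] N} (hB : B.IsAlt)
    {x y u u' : M} (hxy : B x y = 0) (hu : u ∈ span R {x, y}) (hu' : u' ∈ span R {x, y}) :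
    B u u' = 0 := by
  obtain ⟨a, b, rfl⟩ := mem_span_pair.1 hu
  obtain ⟨a', b', rfl⟩ := mem_span_pair.1 hu'
  simp [hB.self_eq_zero, hxy, ← hB.neg x y]

namespace AlternatingMap

variable {R M N ι : Type*} [CommRing R] [AddCommGroup M] [Module R M] [AddCommGroup N] [Module R N]

theorem compLinearMap_projection_eq_self [Fintype ι] {A B : Submodule R M} (h : IsCompl B A)
    (g : M [⋀^ι]→ₗ[R] N) (hg : ∀ v, (∃ i, v i ∈ A) → g v = 0) :
    g.compLinearMap (B.projection A h) = g := by
  classical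
  ext v
  set p := fun i => B.projection A h (v i)
  set q := fun i => A.projection B h.symm (v i)
  have hv : p + q = v := funext fun i => projection_add_projection_eq_self h (v i)
  conv_rhs => rw [← hv]
  change _ = g.toMultilinearMap (p + q)
  rw [MultilinearMap.map_add_univ, Finset.sum_eq_single Finset.univ]
  · simp [p]
  · intro s _ hs
    obtain ⟨i, hi⟩ : ∃ i, i ∉ s := by simpa [Finset.eq_univ_iff_forall] using hs
    exact hg _ ⟨i, by simp [Finset.piecewise_eq_of_notMem _ _ _ hi, q]⟩
  · simp

theorem map_vecCons_vecCons_eq_zero_of_mem_span_pair {n : ℕ} (f : M [⋀^Fin (n + 2)]→ₗ[R] N)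
    {x y u u' : M} (hxy : ∀ w, f (Matrix.vecCons x (Matrix.vecCons y w)) = 0)
    (hu : u ∈ span R {x, y}) (hu' : u' ∈ span R {x, y}) (w : Fin n → M) :
    f (Matrix.vecCons u (Matrix.vecCons u' w)) = 0 := by
  have hB : (curryLeftLinearMap ∘ₗ f.curryLeft).IsAlt := f.curryLeft_same
  have hxy' : (curryLeftLinearMap ∘ₗ f.curryLeft) x y = 0 := ext hxy
  exact congr($(hB.eq_zero_of_mem_span_pair hxy' hu hu') w)

theorem not_linearIndependent_of_forall_map_snoc_eq_zero {k V : Type*} [Field k] [AddCommGroup V]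
    [Module k V] {n : ℕ} (hV : finrank k V = n + 1)
    {f : V [⋀^Fin (n + 1)]→ₗ[k] k} (hf : f ≠ 0) {v : Fin n → V}
    (h : ∀ z, f (Fin.snoc v z) = 0) : ¬LinearIndependent k v := by
  intro hv
  have : FiniteDimensional k V := Module.finite_of_finrank_eq_succ hV
  obtain ⟨z, hz⟩ : ∃ z, z ∉ span k (Set.range v) := by
    by_contra! hall
    have hn := finrank_span_eq_card hv
    rw [eq_top_iff'.2 hall, finrank_top, hV, Fintype.card_fin] at hn
    omega
  have hvz := linearIndependent_finSnoc.2 ⟨hv, hz⟩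
  let b := basisOfLinearIndependentOfCardEqFinrank hvz (by rw [Fintype.card_fin, hV])
  apply (f.map_basis_ne_zero_iff b).2 hf
  rw [coe_basisOfLinearIndependentOfCardEqFinrank]
  exact h z

end AlternatingMap

theorem Submodule.inf_ne_bot_of_forall_map_snoc_eq_zero {k W : Type*} [Field k] [AddCommGroup W]
    [Module k W] [FiniteDimensional k W] {n : ℕ} {A B U : Submodule k W} (h : IsCompl B A)
    (hB : finrank k B = n + 1) (hU : finrank k U = n) {g : W [⋀^Fin (n + 1)]→ₗ[k] k}
    (hg0 : g ≠ 0) (hgA : ∀ v, (∃ i, v i ∈ A) → g v = 0)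
    (hgU : ∀ u : Fin n → W, (∀ i, u i ∈ U) → ∀ z ∈ B, g (Fin.snoc u z) = 0) :
    U ⊓ A ≠ ⊥ := by
  intro hUA
  set q := B.projectionOnto A h
  have hproj := g.compLinearMap_projection_eq_self h hgA
  let b := finBasisOfFinrankEq k U hU
  have hker : LinearMap.ker (q ∘ₗ U.subtype) = ⊥ := by
    rw [LinearMap.ker_comp, ker_projectionOnto, ← disjoint_iff_comap_eq_bot, disjoint_iff, hUA]
  have hgB : g.compLinearMap B.subtype ≠ 0 := by
    intro h0
    apply hg0
    rw [← hproj, projection, ← AlternatingMap.compLinearMap_assoc, h0,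
      AlternatingMap.zero_compLinearMap]
  refine AlternatingMap.not_linearIndependent_of_forall_map_snoc_eq_zero hB hgB (fun z => ?_)
    (b.linearIndependent.map' _ hker)
  have hsnoc : B.subtype ∘ Fin.snoc ((q ∘ₗ U.subtype) ∘ b) z
      = B.projection A h ∘ Fin.snoc (U.subtype ∘ b) z := by
    rw [Fin.comp_snoc, Fin.comp_snoc, projection_apply_of_mem_left h z.2]
    rfl
  have hzero := hgU _ (fun i => (b i).2) z z.2
  rw [← hproj] at hzero
  change g (B.subtype ∘ _) = 0
  rwa [hsnoc]

theorem sup_inf_eq_left_of_disjoint {α : Type*} [Lattice α] [IsModularLattice α] [OrderBot α]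
    {x y a b : α} (hx : x ≤ a) (hy : y ≤ b) (hab : Disjoint a b) : (x ⊔ y) ⊓ a = x := by
  rw [sup_inf_assoc_of_le y hx, (hab.mono_right hy).symm.eq_bot, sup_bot_eq]

namespace Submodule

section Ring

variable {R M : Type*} [Ring R] [AddCommGroup M] [Module R M] {A B : Submodule R M} {a b : M}

theorem span_pair_inf_eq_left (hAB : Disjoint A B) (ha : a ∈ A) (hb : b ∈ B) :
    span R {a, b} ⊓ A = R ∙ a := by
  rw [span_insert]
  exact sup_inf_eq_left_of_disjoint ((span_singleton_le_iff_mem _ _).2 ha)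
    ((span_singleton_le_iff_mem _ _).2 hb) hAB

theorem span_pair_inf_eq_right (hAB : Disjoint A B) (ha : a ∈ A) (hb : b ∈ B) :
    span R {a, b} ⊓ B = R ∙ b := by
  rw [Set.pair_comm]
  exact span_pair_inf_eq_left hAB.symm hb ha

end Ring

variable {K V : Type*} [Field K] [AddCommGroup V] [Module K V]

theorem finrank_span_pair_of_disjoint {A B : Submodule K V} (hAB : Disjoint A B) {a b : V}
    (ha : a ∈ A) (hb : b ∈ B) (ha0 : a ≠ 0) (hb0 : b ≠ 0) : finrank K (span K {a, b}) = 2 := by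
  have hdisj : Disjoint (K ∙ a) (K ∙ b) :=
    hAB.mono ((span_singleton_le_iff_mem _ _).2 ha) ((span_singleton_le_iff_mem _ _).2 hb)
  have := finrank_sup_add_finrank_inf_eq (K ∙ a) (K ∙ b)
  rw [hdisj.eq_bot, finrank_bot, finrank_span_singleton ha0, finrank_span_singleton hb0] at this
  rw [span_insert]
  omega

theorem finrank_inf_ker_add_one {A : Submodule K V} [FiniteDimensional K A] {f : V →ₗ[K] K}
    (hf : ∃ a ∈ A, f a ≠ 0) : finrank K ↥(A ⊓ LinearMap.ker f) + 1 = finrank K A := by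
  have hf' : f.domRestrict A ≠ 0 := by
    obtain ⟨a, ha, hfa⟩ := hf
    exact fun h0 => hfa congr($h0 ⟨a, ha⟩)
  rw [← Module.Dual.finrank_ker_add_one_of_ne_zero hf', LinearMap.ker_domRestrict,
    ← finrank_map_subtype_eq, map_comap_subtype]

end Submodule

theorem LinearMap.iInf_ker_span_singleton {R M M' N : Type*} [CommRing R] [AddCommGroup M]
    [Module R M] [AddCommGroup M'] [Module R M'] [AddCommGroup N] [Module R N]
    (F : M →ₗ[R] M' →ₗ[R] N) (a : M) : ⨅ b : ↥(R ∙ a), ker (F b) = ker (F a) := by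
  refine le_antisymm (iInf_le _ (⟨a, mem_span_singleton_self a⟩ : ↥(R ∙ a)))
    (le_iInf fun b => ?_)
  obtain ⟨c, hc⟩ := mem_span_singleton.1 b.2
  rw [← hc, map_smul]
  exact ker_le_ker_smul _ _

theorem LinearMap.span_singleton_eq_of_inf_ker_flip_eq {K V W : Type*} [Field K] [AddCommGroup V]
    [Module K V] [AddCommGroup W] [Module K W] {A : Submodule K V} {B : Submodule K W}
    [FiniteDimensional K A] {F : V →ₗ[K] W →ₗ[K] K}
    (hF : ∀ b ∈ B, b ≠ 0 → ∃ a ∈ A, F a b ≠ 0) {b b' : W} (hb : b ∈ B) (hb' : b' ∈ B)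
    (hb0 : b ≠ 0) (h : A ⊓ ker (F.flip b) = A ⊓ ker (F.flip b')) : K ∙ b = K ∙ b' := by
  obtain ⟨x, hxA, hx⟩ := hF b hb hb0
  set f := (F.flip b).domRestrict A
  set g := (F.flip b').domRestrict A
  have hker : ker f = ker g := by
    ext y
    simpa [f, g] using SetLike.ext_iff.1 h (y : V)
  have hfx : f ⟨x, hxA⟩ ≠ 0 := hx
  have hgx : g ⟨x, hxA⟩ ≠ 0 := by
    rw [Ne, ← mem_ker, ← hker, mem_ker]
    exact hx
  set c := g ⟨x, hxA⟩ / f ⟨x, hxA⟩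
  have hc : c ≠ 0 := div_ne_zero hgx hfx
  have hcfg : c • f = g :=
    Module.Dual.eq_of_ker_eq_of_apply_eq ⟨x, hxA⟩ (by rw [ker_smul _ _ hc, hker])
      (by simp [c, div_mul_cancel₀ _ hfx]) (by simpa [c] using ⟨hgx, hfx⟩)
  have hb'c : b' = c • b := by
    by_contra hne
    obtain ⟨a, ha, hab⟩ := hF (b' - c • b) (B.sub_mem hb' (B.smul_mem c hb)) (sub_ne_zero.2 hne)
    apply hab
    have hcab : c * F a b = F a b' := congr($hcfg ⟨a, ha⟩)
    rw [map_sub, map_smul, smul_eq_mul, hcab, sub_self]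
  rw [hb'c, span_singleton_smul_eq (IsUnit.mk0 c hc)]

theorem LinearMap.exists_ne_zero_forall_apply_eq_zero {K V W : Type*} [Field K] [AddCommGroup V]
    [Module K V] [AddCommGroup W] [Module K W] {P : Submodule K V} {B : Submodule K W}
    [FiniteDimensional K P] [FiniteDimensional K B] (F : V →ₗ[K] W →ₗ[K] K)
    (h : finrank K P < finrank K B) : ∃ b ∈ B, b ≠ 0 ∧ ∀ a ∈ P, F a b = 0 := by
  set T := (F.compl₁₂ P.subtype B.subtype).flip
  have hT : ker T ≠ ⊥ :=
    ker_ne_bot_of_finrank_lt (by rwa [finrank_linearMap, finrank_self, mul_one])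
  obtain ⟨b, hbT, hb0⟩ := exists_mem_ne_zero_of_ne_bot hT
  refine ⟨b, b.2, fun h0 => hb0 (Subtype.ext h0), fun a ha => ?_⟩
  exact congr($(mem_ker.1 hbT) ⟨a, ha⟩)

section Flags

variable {k W : Type*} [Field k] [AddCommGroup W] [Module k W] {A1 A2 : Submodule k W}

theorem map_vecCons_eq_zero_of_mem_span_pair {lam1 lam2 : W [⋀^Fin 3]→ₗ[k] k}
    (hlam1 : ∀ v : Fin 3 → W, (∃ i, v i ∈ A1) → lam1 v = 0)
    (hlam2 : ∀ v : Fin 3 → W, (∃ i, v i ∈ A2) → lam2 v = 0) {a1 a2 u u' : W} (ha1 : a1 ∈ A1)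
    (ha2 : a2 ∈ A2) (hu : u ∈ span k {a1, a2}) (hu' : u' ∈ span k {a1, a2}) (w : W) :
    (lam1 + lam2) ![u, u', w] = 0 :=
  (lam1 + lam2).map_vecCons_vecCons_eq_zero_of_mem_span_pair
    (fun w => by rw [AlternatingMap.add_apply, hlam1 _ ⟨0, ha1⟩, hlam2 _ ⟨1, ha2⟩, add_zero])
    hu hu' ![w]

theorem exists_eq_span_pair_of_forall_map_vecCons_eq_zero [FiniteDimensional k W]
    (hA : IsCompl A1 A2) (hA1 : finrank k A1 = 3) (hA2 : finrank k A2 = 3)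
    {lam1 lam2 : W [⋀^Fin 3]→ₗ[k] k} (hlam1ne : lam1 ≠ 0) (hlam2ne : lam2 ≠ 0)
    (hlam1 : ∀ v : Fin 3 → W, (∃ i, v i ∈ A1) → lam1 v = 0)
    (hlam2 : ∀ v : Fin 3 → W, (∃ i, v i ∈ A2) → lam2 v = 0) {U : Submodule k W}
    (hU : finrank k U = 2) (hann : ∀ u ∈ U, ∀ u' ∈ U, ∀ w : W, (lam1 + lam2) ![u, u', w] = 0) :
    ∃ a1 ∈ A1, ∃ a2 ∈ A2, a1 ≠ 0 ∧ a2 ≠ 0 ∧ U = span k {a1, a2} := by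
  have inf_ne_bot : ∀ {A B : Submodule k W} {g g' : W [⋀^Fin 3]→ₗ[k] k}, IsCompl B A →
      finrank k B = 3 → g ≠ 0 → (∀ v : Fin 3 → W, (∃ i, v i ∈ A) → g v = 0) →
      (∀ v : Fin 3 → W, (∃ i, v i ∈ B) → g' v = 0) →
      (∀ u ∈ U, ∀ u' ∈ U, ∀ w : W, (g + g') ![u, u', w] = 0) → U ⊓ A ≠ ⊥ := by
    intro A B g g' h hB hg0 hgA hg'B hann
    refine inf_ne_bot_of_forall_map_snoc_eq_zero h hB hU hg0 hgA fun u hu z hz => ?_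
    have hsnoc : Fin.snoc u z = ![u 0, u 1, z] := by
      ext i; fin_cases i <;> rfl
    have := hann _ (hu 0) _ (hu 1) z
    rwa [AlternatingMap.add_apply, hg'B _ ⟨2, hz⟩, add_zero, ← hsnoc] at this
  obtain ⟨a1, ⟨hU1, ha1⟩, ha10⟩ :=
    exists_mem_ne_zero_of_ne_bot (inf_ne_bot hA.symm hA2 hlam1ne hlam1 hlam2 hann)
  obtain ⟨a2, ⟨hU2, ha2⟩, ha20⟩ := exists_mem_ne_zero_of_ne_bot
    (inf_ne_bot hA hA1 hlam2ne hlam2 hlam1 (by simpa only [add_comm] using hann))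
  refine ⟨a1, ha1, a2, ha2, ha10, ha20, (eq_of_le_of_finrank_eq ?_ ?_).symm⟩
  · rw [span_le]
    exact Set.insert_subset hU1 (Set.singleton_subset_iff.2 hU2)
  · rw [finrank_span_pair_of_disjoint hA.disjoint ha1 ha2 ha10 ha20, hU]

theorem forall_map_vecCons_eq_zero_and_isotropic_iff [FiniteDimensional k W]
    (hA : IsCompl A1 A2) (hA1 : finrank k A1 = 3) (hA2 : finrank k A2 = 3)
    {lam1 lam2 : W [⋀^Fin 3]→ₗ[k] k} (hlam1ne : lam1 ≠ 0) (hlam2ne : lam2 ≠ 0)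
    (hlam1 : ∀ v : Fin 3 → W, (∃ i, v i ∈ A1) → lam1 v = 0)
    (hlam2 : ∀ v : Fin 3 → W, (∃ i, v i ∈ A2) → lam2 v = 0) {mu : W →ₗ[k] W →ₗ[k] k}
    (hmu : mu.IsAlt) {U : Submodule k W} (hU : finrank k U = 2) :
    ((∀ u ∈ U, ∀ u' ∈ U, ∀ w : W, (lam1 + lam2) ![u, u', w] = 0) ∧
        (∀ u ∈ U, ∀ u' ∈ U, mu u u' = 0)) ↔
      ∃ a1 ∈ A1, ∃ a2 ∈ A2, a1 ≠ 0 ∧ a2 ≠ 0 ∧ mu a1 a2 = 0 ∧ U = span k {a1, a2} := by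
  refine ⟨fun ⟨hann, hiso⟩ => ?_, ?_⟩
  · obtain ⟨a1, ha1, a2, ha2, ha10, ha20, rfl⟩ :=
      exists_eq_span_pair_of_forall_map_vecCons_eq_zero hA hA1 hA2 hlam1ne hlam2ne hlam1 hlam2
        hU hann
    exact ⟨a1, ha1, a2, ha2, ha10, ha20,
      hiso _ (subset_span (by simp)) _ (subset_span (by simp)), rfl⟩
  · rintro ⟨a1, ha1, a2, ha2, -, -, hmu0, rfl⟩
    exact ⟨fun u hu u' hu' => map_vecCons_eq_zero_of_mem_span_pair hlam1 hlam2 ha1 ha2 hu hu',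
      fun u hu u' hu' => hmu.eq_zero_of_mem_span_pair hmu0 hu hu'⟩

variable (A1 A2) (mu : W →ₗ[k] W →ₗ[k] k)

def flagOfPlane (U : Submodule k W) : Submodule k W × Submodule k W :=
  (U ⊓ A1, A1 ⊓ ⨅ b : ↥(U ⊓ A2), LinearMap.ker (mu.flip (b : W)))

variable {A1 A2}

theorem flagOfPlane_span_pair (hA : Disjoint A1 A2) {a1 a2 : W} (ha1 : a1 ∈ A1) (ha2 : a2 ∈ A2) :
    flagOfPlane A1 A2 mu (span k {a1, a2}) = (k ∙ a1, A1 ⊓ LinearMap.ker (mu.flip a2)) := by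
  rw [flagOfPlane, span_pair_inf_eq_left hA ha1 ha2, span_pair_inf_eq_right hA ha1 ha2,
    LinearMap.iInf_ker_span_singleton]

theorem bijOn_flagOfPlane [FiniteDimensional k W] (hA : Disjoint A1 A2)
    (hA1 : finrank k A1 = 3) (hA2 : finrank k A2 = 3)
    (hnd : ∀ a2 ∈ A2, a2 ≠ 0 → ∃ a1 ∈ A1, mu a1 a2 ≠ 0) :
    Set.BijOn (flagOfPlane A1 A2 mu)
      {U | ∃ a1 ∈ A1, ∃ a2 ∈ A2, a1 ≠ 0 ∧ a2 ≠ 0 ∧ mu a1 a2 = 0 ∧ U = span k {a1, a2}}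
      {LP | LP.1 ≤ LP.2 ∧ LP.2 ≤ A1 ∧ finrank k LP.1 = 1 ∧ finrank k LP.2 = 2} := by
  refine ⟨?_, ?_, ?_⟩
  · rintro _ ⟨a1, ha1, a2, ha2, ha10, ha20, hmu, rfl⟩
    rw [flagOfPlane_span_pair mu hA ha1 ha2]
    have := finrank_inf_ker_add_one (f := mu.flip a2) (hnd a2 ha2 ha20)
    exact ⟨(span_singleton_le_iff_mem _ _).2 ⟨ha1, hmu⟩, inf_le_left,
      finrank_span_singleton ha10, show finrank k ↥(A1 ⊓ _) = 2 by omega⟩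
  · rintro _ ⟨a1, ha1, a2, ha2, -, ha20, -, rfl⟩ _ ⟨b1, hb1, b2, hb2, -, -, -, rfl⟩ h
    rw [flagOfPlane_span_pair mu hA ha1 ha2, flagOfPlane_span_pair mu hA hb1 hb2] at h
    obtain ⟨h1, h2⟩ := Prod.mk.inj h
    rw [span_insert, span_insert, h1,
      LinearMap.span_singleton_eq_of_inf_ker_flip_eq hnd ha2 hb2 ha20 h2]
  · rintro ⟨L, P⟩ ⟨hLP, hPA, hL, hP⟩
    dsimp only at hLP hPA hL hP
    obtain ⟨a1, ha1L, ha10⟩ := exists_mem_ne_zero_of_ne_bot (p := L) (by rintro rfl; simp at hL)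
    have hL' : L = k ∙ a1 := (eq_of_le_of_finrank_eq ((span_singleton_le_iff_mem _ _).2 ha1L)
      (by rw [finrank_span_singleton ha10, hL])).symm
    have ha1 : a1 ∈ A1 := hPA (hLP ha1L)
    obtain ⟨a2, ha2, ha20, hPa2⟩ :=
      LinearMap.exists_ne_zero_forall_apply_eq_zero mu (P := P) (B := A2) (by omega)
    have hP' : A1 ⊓ LinearMap.ker (mu.flip a2) = P := by
      have := finrank_inf_ker_add_one (f := mu.flip a2) (hnd a2 ha2 ha20)
      exact (eq_of_le_of_finrank_eq (le_inf hPA fun a ha => hPa2 a ha) (by omega)).symm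
    refine ⟨span k {a1, a2}, ⟨a1, ha1, a2, ha2, ha10, ha20, hPa2 a1 (hLP ha1L), rfl⟩, ?_⟩
    rw [flagOfPlane_span_pair mu hA ha1 ha2, hP', hL']

end Flags

theorem stmt_2_general (k : Type*) [Field k]
    (W : Type*) [AddCommGroup W] [Module k W] [FiniteDimensional k W]
    (A1 A2 : Submodule k W)
    (hA12 : A1 ⊓ A2 = ⊥) (hA12' : A1 ⊔ A2 = ⊤)
    (hA1 : finrank k A1 = 3) (hA2 : finrank k A2 = 3)
    (lam1 lam2 : AlternatingMap k W k (Fin 3))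
    (hlam1ne : lam1 ≠ 0) (hlam2ne : lam2 ≠ 0)
    (hlam1 : ∀ v : Fin 3 → W, (∃ i, v i ∈ A1) → lam1 v = 0)
    (hlam2 : ∀ v : Fin 3 → W, (∃ i, v i ∈ A2) → lam2 v = 0)
    (lam : AlternatingMap k W k (Fin 3)) (hlam : lam = lam1 + lam2)
    (mu : W →ₗ[k] W →ₗ[k] k) (hmualt : ∀ v : W, mu v v = 0)
    (hnd2 : ∀ a2 ∈ A2, a2 ≠ 0 → ∃ a1 ∈ A1, mu a1 a2 ≠ 0) :
    (∀ U2 : Submodule k W, finrank k U2 = 2 →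
      (((∀ u ∈ U2, ∀ u' ∈ U2, ∀ w : W, lam ![u, u', w] = 0) ∧
        (∀ u ∈ U2, ∀ u' ∈ U2, mu u u' = 0)) ↔
       (∃ a1 ∈ A1, ∃ a2 ∈ A2, a1 ≠ 0 ∧ a2 ≠ 0 ∧ mu a1 a2 = 0 ∧
         U2 = Submodule.span k {a1, a2}))) ∧
    Set.BijOn
      (fun U2 : Submodule k W =>
        ((U2 ⊓ A1,
          A1 ⊓ ⨅ b : ↥(U2 ⊓ A2), LinearMap.ker (mu.flip (b : W))) :
          Submodule k W × Submodule k W))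
      {U2 : Submodule k W | finrank k U2 = 2 ∧
        (∀ u ∈ U2, ∀ u' ∈ U2, ∀ w : W, lam ![u, u', w] = 0) ∧
        (∀ u ∈ U2, ∀ u' ∈ U2, mu u u' = 0)}
      {LP : Submodule k W × Submodule k W |
        LP.1 ≤ LP.2 ∧ LP.2 ≤ A1 ∧ finrank k LP.1 = 1 ∧ finrank k LP.2 = 2} := by
  subst hlam
  have hA : IsCompl A1 A2 := ⟨disjoint_iff.2 hA12, codisjoint_iff.2 hA12'⟩
  have hchar := fun (U : Submodule k W) (hU : finrank k U = 2) =>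
    forall_map_vecCons_eq_zero_and_isotropic_iff hA hA1 hA2 hlam1ne hlam2ne hlam1 hlam2 hmualt hU
  refine ⟨hchar, ?_⟩
  convert bijOn_flagOfPlane mu hA.disjoint hA1 hA2 hnd2 using 1
  · rfl
  ext U
  refine ⟨fun ⟨hU, h⟩ => (hchar U hU).1 h, ?_⟩
  rintro ⟨a1, ha1, a2, ha2, ha10, ha20, hmu0, rfl⟩
  have hU := finrank_span_pair_of_disjoint hA.disjoint ha1 ha2 ha10 ha20
  exact ⟨hU, (hchar _ hU).2 ⟨a1, ha1, a2, ha2, ha10, ha20, hmu0, rfl⟩⟩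

/-- For a general 3-form `λ̄ = λ̄1 + λ̄2` on `W̄ = A1 ⊕ A2` and a
2-form `μ` inducing a nondegenerate pairing between `A1` and `A2`, the
2-dimensional subspaces annihilated by `λ̄` and isotropic for `μ` are exactly the
spans of pairs `(a1, a2)` with `0 ≠ a1 ∈ A1`, `0 ≠ a2 ∈ A2`, `μ(a1,a2) = 0`;
moreover `U2 ↦ (U2 ⊓ A1, {a ∈ A1 : μ(a, U2 ⊓ A2) = 0})` is a bijection onto the
set of full flags in `A1`. -/
theorem stmt_2 (k : Type*) [Field k] [CharZero k]
    (W : Type*) [AddCommGroup W] [Module k W] [FiniteDimensional k W]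
    (hW : finrank k W = 6)
    (A1 A2 : Submodule k W)
    (hA12 : A1 ⊓ A2 = ⊥) (hA12' : A1 ⊔ A2 = ⊤)
    (hA1 : finrank k A1 = 3) (hA2 : finrank k A2 = 3)
    (lam1 lam2 : AlternatingMap k W k (Fin 3))
    (hlam1ne : lam1 ≠ 0) (hlam2ne : lam2 ≠ 0)
    (hlam1 : ∀ v : Fin 3 → W, (∃ i, v i ∈ A1) → lam1 v = 0)
    (hlam2 : ∀ v : Fin 3 → W, (∃ i, v i ∈ A2) → lam2 v = 0)
    (lam : AlternatingMap k W k (Fin 3)) (hlam : lam = lam1 + lam2)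
    (mu : W →ₗ[k] W →ₗ[k] k) (hmualt : ∀ v : W, mu v v = 0)
    (hnd1 : ∀ a1 ∈ A1, a1 ≠ 0 → ∃ a2 ∈ A2, mu a1 a2 ≠ 0)
    (hnd2 : ∀ a2 ∈ A2, a2 ≠ 0 → ∃ a1 ∈ A1, mu a1 a2 ≠ 0) :
    (∀ U2 : Submodule k W, finrank k U2 = 2 →
      (((∀ u ∈ U2, ∀ u' ∈ U2, ∀ w : W, lam ![u, u', w] = 0) ∧
        (∀ u ∈ U2, ∀ u' ∈ U2, mu u u' = 0)) ↔
       (∃ a1 ∈ A1, ∃ a2 ∈ A2, a1 ≠ 0 ∧ a2 ≠ 0 ∧ mu a1 a2 = 0 ∧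
         U2 = Submodule.span k {a1, a2}))) ∧
    Set.BijOn
      (fun U2 : Submodule k W =>
        ((U2 ⊓ A1,
          A1 ⊓ ⨅ b : ↥(U2 ⊓ A2), LinearMap.ker (mu.flip (b : W))) :
          Submodule k W × Submodule k W))
      {U2 : Submodule k W | finrank k U2 = 2 ∧
        (∀ u ∈ U2, ∀ u' ∈ U2, ∀ w : W, lam ![u, u', w] = 0) ∧
        (∀ u ∈ U2, ∀ u' ∈ U2, mu u u' = 0)}
      {LP : Submodule k W × Submodule k W |
        LP.1 ≤ LP.2 ∧ LP.2 ≤ A1 ∧ finrank k LP.1 = 1 ∧ finrank k LP.2 = 2} :=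
  stmt_2_general k W A1 A2 hA12 hA12' hA1 hA2 lam1 lam2 hlam1ne hlam2ne hlam1 hlam2 lam hlam mu
    hmualt hnd2
end

section
/- Let W̄ be a 6-dimensional k-vector space, μ a nondegenerate 2-form on W̄, and W̄ = L1 ⊕ L2 a direct sum decomposition into two 3-dimensional subspaces that are each μ-isotropic (a Lagrangian decomposition). Let λ̄ = λ̄1 + λ̄2 be a 3-form on W̄, where λ̄1, λ̄2 are nonzero 3-forms with λ̄1(v1,v2,v3) = 0 whenever some argument lies in L1 and λ̄2(v1,v2,v3) = 0 whenever some argument lies in L2. Set W = k ⊕ W̄, let w0 = (1,0), let w0∨ : W → k be the projection to the first summand, let p : W → W̄ be the projection to the second summand, and define the 3-form ξ on W by ξ(v1,v2,v3) = λ̄(pv1,pv2,pv3) + w0∨(v1)μ(pv2,pv3) − w0∨(v2)μ(pv1,pv3) + w0∨(v3)μ(pv1,pv2). Then ξ is a general 3-form on W: there exists a basis f0,f1,…,f6 of W such that ξ(f1,f2,f3) = ξ(f4,f5,f6) = ξ(f0,f1,f6) = ξ(f0,f2,f5) = ξ(f0,f3,f4) = 1 and ξ vanishes on every other increasing triple of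 basis vectors (i.e. ξ = x123 + x456 + x016 + x025 + x034 in the dual coordinates). -/
/-!
The form `μ` pairs the two Lagrangians perfectly, so a basis `u` of `L₁` has a `μ`-dual basis
of `L₂`; listed in reverse order, it turns the part `w₀∨ ∧ μ` of `ξ` into `x016 + x025 + x034`
up to one scalar. Since `λ̄₂` vanishes as soon as one argument lies in `L₂`, it is determined by
its value on `u`, which is therefore nonzero; likewise `λ̄₁` is determined by its value on the
basis of `L₂`, and both vanish on triples meeting `L₁` and `L₂`. Rescaling `u` and the dual
basis by cube roots (`k` is algebraically closed) makes `λ̄ = x123 + x456`, and rescaling `w₀`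
absorbs the leftover scalar.
-/

open Module

namespace AlternatingMap

variable {R M N ι : Type*}

theorem map_add_eq_of_forall_mem [CommSemiring R] [AddCommMonoid M] [Module R M]
    [AddCommMonoid N] [Module R N] [Fintype ι] (f : M [⋀^ι]→ₗ[R] N) {L : Submodule R M}
    (hf : ∀ v, (∃ i, v i ∈ L) → f v = 0) {a : ι → M} (ha : ∀ i, a i ∈ L) (b : ι → M) :
    f (a + b) = f b := by
  classical
  rw [f.map_add_univ, Finset.sum_eq_single ∅ _ (by simp), Finset.piecewise_empty]
  intro s _ hs
  obtain ⟨i, hi⟩ := Finset.nonempty_iff_ne_empty.2 hs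
  exact hf _ ⟨i, by rw [s.piecewise_eq_of_mem _ _ hi]; exact ha i⟩

/-- `f` factors through the projection onto `L₂` along `L₁`, and on `L₂` it is a multiple of
`w.det`. -/
theorem apply_basis_ne_zero [CommRing R] [AddCommGroup M] [Module R M] [Fintype ι]
    [DecidableEq ι] {L₁ L₂ : Submodule R M} (hL : L₁ ⊔ L₂ = ⊤) {f : M [⋀^ι]→ₗ[R] R}
    (hf₀ : f ≠ 0) (hf : ∀ v, (∃ i, v i ∈ L₁) → f v = 0) (w : Basis ι R L₂) :
    f (fun i => (w i : M)) ≠ 0 := by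
  intro hw
  apply hf₀
  ext v
  choose a ha b hb hab using
    fun i => Submodule.mem_sup.1 (hL ▸ Submodule.mem_top : v i ∈ L₁ ⊔ L₂)
  have hrestrict : f.compLinearMap L₂.subtype = 0 := by
    rw [(f.compLinearMap L₂.subtype).eq_smul_basis_det w, compLinearMap_apply]
    simp [hw]
  calc f v = f (a + b) := by congr; funext i; exact (hab i).symm
    _ = f.compLinearMap L₂.subtype (fun i => ⟨b i, hb i⟩) := f.map_add_eq_of_forall_mem hf ha b
    _ = 0 := by rw [hrestrict]; rfl

theorem exists_smul_apply_eq_one {k : Type*} [Field k] [IsAlgClosed k] [AddCommGroup M]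
    [Module k M] {n : ℕ} (hn : n ≠ 0) (f : M [⋀^Fin n]→ₗ[k] k) {v : Fin n → M}
    (hv : f v ≠ 0) : ∃ a : k, a ≠ 0 ∧ f (fun i => a • v i) = 1 := by
  obtain ⟨a, ha⟩ := IsAlgClosed.exists_pow_nat_eq (f v)⁻¹ (Nat.pos_of_ne_zero hn)
  refine ⟨a, fun h => hv (by simpa [h, zero_pow hn, eq_comm] using ha), ?_⟩
  have := f.map_smul_univ (fun _ => a) v
  rwa [Finset.prod_const, Finset.card_univ, Fintype.card_fin, ha, smul_eq_mul,
    inv_mul_cancel₀ hv] at this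

section toBilin

variable [CommSemiring R] [AddCommMonoid M] [Module R M] [AddCommMonoid N] [Module R N]
  (mu : M [⋀^Fin 2]→ₗ[R] N)

def toBilin : M →ₗ[R] M →ₗ[R] N :=
  LinearMap.mk₂ R (fun x y => mu ![x, y]) (fun x x' y => mu.map_vecCons_add _ x x')
    (fun c x y => mu.map_vecCons_smul _ c x)
    (fun x y y' => by simpa using (mu.curryLeft x).map_vecCons_add ![] y y')
    (fun c x y => by simpa using (mu.curryLeft x).map_vecCons_smul ![] c y)

@[simp]
theorem toBilin_apply (x y : M) : mu.toBilin x y = mu ![x, y] := rfl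

theorem toBilin_isAlt : mu.toBilin.IsAlt :=
  fun x => mu.map_eq_zero_of_eq ![x, x] (i := 0) (j := 1) rfl (by decide)

end toBilin

end AlternatingMap

theorem Module.Basis.exists_coe_eq_finAppend {R M : Type*} [Ring R] [AddCommGroup M]
    [Module R M] {L₁ L₂ : Submodule R M} (h : IsCompl L₁ L₂)
    {m n : ℕ} (u : Basis (Fin m) R L₁) (w : Basis (Fin n) R L₂) :
    ∃ e : Basis (Fin (m + n)) R M, ⇑e = Fin.append (fun i => (u i : M)) (fun j => (w j : M)) := by
  refine ⟨((u.prod w).map (Submodule.prodEquivOfIsCompl L₁ L₂ h)).reindex finSumFinEquiv, ?_⟩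
  funext i
  refine Fin.addCases (fun i => ?_) (fun j => ?_) i <;> simp [Basis.prod_apply]

theorem Module.Basis.exists_coe_eq_finCons_prod {k M : Type*} [Field k] [AddCommGroup M]
    [Module k M] {n : ℕ} (e : Basis (Fin n) k M) {t : k} (ht : t ≠ 0) :
    ∃ f : Basis (Fin (n + 1)) k (k × M), ⇑f = Fin.cons (t, 0) (fun i => (0, e i)) := by
  have : FiniteDimensional k M := e.finiteDimensional_of_finite
  have hspan : Submodule.span k (Set.range fun i => ((0 : k), e i)) ≤
      LinearMap.ker (LinearMap.fst k k M) :=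
    Submodule.span_le.2 (Set.range_subset_iff.2 fun i => rfl)
  have hli : LinearIndependent k
      (Fin.cons (t, 0) (fun i => ((0 : k), e i)) : Fin (n + 1) → k × M) :=
    linearIndependent_finCons.2 ⟨e.linearIndependent.map' (LinearMap.inr k k M)
      (LinearMap.ker_eq_bot.2 LinearMap.inr_injective), fun h => ht (hspan h)⟩
  have hcard : Fintype.card (Fin (n + 1)) = finrank k (k × M) := by
    rw [Module.finrank_prod, Module.finrank_self, Module.finrank_eq_card_basis e]
    simp [add_comm]
  exact ⟨basisOfLinearIndependentOfCardEqFinrank hli hcard,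
    coe_basisOfLinearIndependentOfCardEqFinrank hli hcard⟩

section LagrangianDecomposition

variable {k M : Type*} [Field k] [AddCommGroup M] [Module k M]

theorem exists_dualBasis_of_isotropic [FiniteDimensional k M] {ι : Type*} [Fintype ι]
    [DecidableEq ι] (mu : M [⋀^Fin 2]→ₗ[k] k) (hmu : ∀ v, (∀ w, mu ![v, w] = 0) → v = 0)
    {L₁ L₂ : Submodule k M} (hL : L₁ ⊔ L₂ = ⊤) (hL₂ : ∀ u ∈ L₂, ∀ v ∈ L₂, mu ![u, v] = 0)
    (hdim : finrank k L₂ = finrank k L₁) (u : Basis ι k L₁) :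
    ∃ w : Basis ι k L₂, ∀ i j, mu ![u i, w j] = if i = j then 1 else 0 := by
  set pairing : L₂ →ₗ[k] Dual k L₁ := mu.toBilin.flip.domRestrict₁₂ L₂ L₁
  have hinj : Function.Injective pairing := by
    rw [← LinearMap.ker_eq_bot, LinearMap.ker_eq_bot']
    intro v hv
    refine Subtype.ext (hmu v fun x => ?_)
    obtain ⟨a, ha, b, hb, rfl⟩ := Submodule.mem_sup.1 (hL ▸ Submodule.mem_top : x ∈ L₁ ⊔ L₂)
    have hav : mu ![a, v] = 0 := LinearMap.congr_fun hv ⟨a, ha⟩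
    rw [← mu.toBilin_apply, map_add, mu.toBilin_isAlt.eq_iff.1 hav, mu.toBilin_apply,
      hL₂ v v.2 b hb, add_zero]
  let e := LinearMap.linearEquivOfInjective pairing hinj (by rw [hdim, Subspace.dual_finrank_eq])
  refine ⟨u.dualBasis.map e.symm, fun i j => ?_⟩
  have : pairing (e.symm (u.dualBasis j)) = u.dualBasis j := e.apply_symm_apply _
  change pairing (e.symm (u.dualBasis j)) (u i) = _
  rw [this, u.dualBasis_apply_self]

theorem exists_adapted_bases [IsAlgClosed k] [FiniteDimensional k M] {n : ℕ} (hn : n ≠ 0)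
    (mu : M [⋀^Fin 2]→ₗ[k] k) (hmu : ∀ v, (∀ w, mu ![v, w] = 0) → v = 0)
    {L₁ L₂ : Submodule k M} (hL : L₁ ⊔ L₂ = ⊤) (hL₂ : ∀ u ∈ L₂, ∀ v ∈ L₂, mu ![u, v] = 0)
    (hL₁dim : finrank k L₁ = n) (hL₂dim : finrank k L₂ = n)
    {lam₁ lam₂ : M [⋀^Fin n]→ₗ[k] k} (hlam₁ne : lam₁ ≠ 0) (hlam₂ne : lam₂ ≠ 0)
    (hlam₁ : ∀ v, (∃ i, v i ∈ L₁) → lam₁ v = 0) (hlam₂ : ∀ v, (∃ i, v i ∈ L₂) → lam₂ v = 0) :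
    ∃ (u : Basis (Fin n) k L₁) (w : Basis (Fin n) k L₂) (s : k), s ≠ 0 ∧
      lam₂ (fun i => (u i : M)) = 1 ∧ lam₁ (fun i => (w i : M)) = 1 ∧
      ∀ i j, mu ![u i, w j] = if j = Fin.rev i then s else 0 := by
  let u₀ := finBasisOfFinrankEq k L₁ hL₁dim
  obtain ⟨a, ha, hau⟩ := lam₂.exists_smul_apply_eq_one hn
    (lam₂.apply_basis_ne_zero (sup_comm L₁ L₂ ▸ hL) hlam₂ne hlam₂ u₀)
  let u := u₀.isUnitSMul (fun _ => ha.isUnit)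
  obtain ⟨w₀, hw₀⟩ := exists_dualBasis_of_isotropic mu hmu hL hL₂ (hL₂dim.trans hL₁dim.symm) u
  let w₁ := w₀.reindex Fin.revPerm
  obtain ⟨b, hb, hbw⟩ :=
    lam₁.exists_smul_apply_eq_one hn (lam₁.apply_basis_ne_zero hL hlam₁ne hlam₁ w₁)
  let w := w₁.isUnitSMul (fun _ => hb.isUnit)
  have hw : ∀ j, (w j : M) = b • (w₀ j.rev : M) := fun j => by
    simp [w, w₁, Basis.isUnitSMul_apply]
  refine ⟨u, w, b, hb, by simpa [u, Basis.isUnitSMul_apply] using hau,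
    by simpa [w, Basis.isUnitSMul_apply] using hbw, fun i j => ?_⟩
  rw [hw, ← mu.toBilin_apply, map_smul, mu.toBilin_apply, hw₀, smul_ite, smul_eq_mul, mul_one,
    smul_zero]
  exact if_congr (by rw [eq_comm, Fin.rev_eq_iff]) rfl rfl

/-- The form `ξ = λ̄ ∘ p + w₀∨ ∧ (μ ∘ p)` on `W = k × W̄`, where `w₀ = (1, 0)`. -/
def extendedForm (lam : M [⋀^Fin 3]→ₗ[k] k) (mu : M [⋀^Fin 2]→ₗ[k] k) (v₁ v₂ v₃ : k × M) : k :=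
  lam ![v₁.2, v₂.2, v₃.2] + v₁.1 * mu ![v₂.2, v₃.2] - v₂.1 * mu ![v₁.2, v₃.2] +
    v₃.1 * mu ![v₁.2, v₂.2]

section extendedForm

variable (lam : M [⋀^Fin 3]→ₗ[k] k) (mu : M [⋀^Fin 2]→ₗ[k] k)

theorem extendedForm_zero_left (t : k) (y z : M) :
    extendedForm lam mu (t, 0) (0, y) (0, z) = t * mu ![y, z] := by
  simp [extendedForm, lam.map_coord_zero 0 (rfl : ![(0 : M), y, z] 0 = 0)]

theorem extendedForm_of_fst_eq_zero (x y z : M) :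
    extendedForm lam mu (0, x) (0, y) (0, z) = lam ![x, y, z] := by
  simp [extendedForm]

end extendedForm

theorem extendedForm_normalForm (mu : M [⋀^Fin 2]→ₗ[k] k) {L₁ L₂ : Submodule k M}
    (hL₁ : ∀ u ∈ L₁, ∀ v ∈ L₁, mu ![u, v] = 0) (hL₂ : ∀ u ∈ L₂, ∀ v ∈ L₂, mu ![u, v] = 0)
    {lam₁ lam₂ : M [⋀^Fin 3]→ₗ[k] k}
    (hlam₁ : ∀ v, (∃ i, v i ∈ L₁) → lam₁ v = 0) (hlam₂ : ∀ v, (∃ i, v i ∈ L₂) → lam₂ v = 0)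
    {u w : Fin 3 → M} (hu : ∀ i, u i ∈ L₁) (hw : ∀ i, w i ∈ L₂)
    (hlam₂u : lam₂ u = 1) (hlam₁w : lam₁ w = 1) {s : k} (hs : s ≠ 0)
    (huw : ∀ i j, mu ![u i, w j] = if j = Fin.rev i then s else 0) (i j l : Fin 7)
    (hij : i < j) (hjl : j < l) :
    let v : Fin 7 → k × M :=
      ![(s⁻¹, 0), (0, u 0), (0, u 1), (0, u 2), (0, w 0), (0, w 1), (0, w 2)]
    extendedForm (lam₁ + lam₂) mu (v i) (v j) (v l) =
      if (i.val, j.val, l.val) = (1,2,3) ∨ (i.val, j.val, l.val) = (4,5,6) ∨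
        (i.val, j.val, l.val) = (0,1,6) ∨ (i.val, j.val, l.val) = (0,2,5) ∨
        (i.val, j.val, l.val) = (0,3,4)
      then 1 else 0 := by
  have huu : ∀ a b, mu ![u a, u b] = 0 := fun a b => hL₁ _ (hu a) _ (hu b)
  have hww : ∀ a b, mu ![w a, w b] = 0 := fun a b => hL₂ _ (hw a) _ (hw b)
  have huuw : ∀ a b c, (lam₁ + lam₂) ![u a, u b, w c] = 0 := fun a b c => by
    rw [AlternatingMap.add_apply, hlam₁ ![u a, u b, w c] ⟨0, hu a⟩,
      hlam₂ ![u a, u b, w c] ⟨2, hw c⟩, add_zero]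
  have huww : ∀ a b c, (lam₁ + lam₂) ![u a, w b, w c] = 0 := fun a b c => by
    rw [AlternatingMap.add_apply, hlam₁ ![u a, w b, w c] ⟨0, hu a⟩,
      hlam₂ ![u a, w b, w c] ⟨2, hw c⟩, add_zero]
  have huuu : (lam₁ + lam₂) ![u 0, u 1, u 2] = 1 := by
    rw [AlternatingMap.add_apply, hlam₁ ![u 0, u 1, u 2] ⟨0, hu 0⟩,
      show ![u 0, u 1, u 2] = u from FinVec.etaExpand_eq u, hlam₂u, zero_add]
  have hwww : (lam₁ + lam₂) ![w 0, w 1, w 2] = 1 := by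
    rw [AlternatingMap.add_apply, hlam₂ ![w 0, w 1, w 2] ⟨0, hw 0⟩,
      show ![w 0, w 1, w 2] = w from FinVec.etaExpand_eq w, hlam₁w, add_zero]
  intro v
  fin_cases i <;> fin_cases j <;> fin_cases l <;>
    first
    | exact absurd hij (by decide)
    | exact absurd hjl (by decide)
    | simp [v, extendedForm_zero_left, extendedForm_of_fst_eq_zero, huu, hww, huw, huuw, huww,
        huuu, hwww, hs]

end LagrangianDecomposition

theorem stmt_11_general (k : Type*) [Field k] [IsAlgClosed k]
    (Wbar : Type*) [AddCommGroup Wbar] [Module k Wbar] [FiniteDimensional k Wbar]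
    (mu : AlternatingMap k Wbar k (Fin 2))
    (hmund : ∀ v : Wbar, (∀ w : Wbar, mu ![v, w] = 0) → v = 0)
    (L1 L2 : Submodule k Wbar)
    (hL12 : L1 ⊓ L2 = ⊥) (hL12' : L1 ⊔ L2 = ⊤)
    (hL1dim : finrank k L1 = 3) (hL2dim : finrank k L2 = 3)
    (hL1iso : ∀ u ∈ L1, ∀ v ∈ L1, mu ![u, v] = 0)
    (hL2iso : ∀ u ∈ L2, ∀ v ∈ L2, mu ![u, v] = 0)
    (lam1 lam2 : AlternatingMap k Wbar k (Fin 3))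
    (hlam1ne : lam1 ≠ 0) (hlam2ne : lam2 ≠ 0)
    (hlam1 : ∀ v : Fin 3 → Wbar, (∃ i, v i ∈ L1) → lam1 v = 0)
    (hlam2 : ∀ v : Fin 3 → Wbar, (∃ i, v i ∈ L2) → lam2 v = 0)
    (lam : AlternatingMap k Wbar k (Fin 3)) (hlam : lam = lam1 + lam2)
    (xi : (k × Wbar) → (k × Wbar) → (k × Wbar) → k)
    (hxi : ∀ v1 v2 v3 : k × Wbar, xi v1 v2 v3 =
      lam ![v1.2, v2.2, v3.2] + v1.1 * mu ![v2.2, v3.2] -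
        v2.1 * mu ![v1.2, v3.2] + v3.1 * mu ![v1.2, v2.2]) :
    ∃ f : Basis (Fin 7) k (k × Wbar),
      ∀ i j l : Fin 7, i < j → j < l →
        xi (f i) (f j) (f l) =
          if (i.val, j.val, l.val) = (1,2,3) ∨
             (i.val, j.val, l.val) = (4,5,6) ∨
             (i.val, j.val, l.val) = (0,1,6) ∨
             (i.val, j.val, l.val) = (0,2,5) ∨
             (i.val, j.val, l.val) = (0,3,4)
          then 1 else 0 := by
  obtain ⟨u, w, s, hs, hlam2u, hlam1w, huw⟩ := exists_adapted_bases (by norm_num) mu hmund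
    hL12' hL2iso hL1dim hL2dim hlam1ne hlam2ne hlam1 hlam2
  obtain ⟨e, he⟩ := Basis.exists_coe_eq_finAppend
    ⟨disjoint_iff.2 hL12, codisjoint_iff.2 hL12'⟩ u w
  obtain ⟨f, hf⟩ := e.exists_coe_eq_finCons_prod (inv_ne_zero hs)
  have hfv : ⇑f = ![(s⁻¹, 0), (0, ↑(u 0)), (0, ↑(u 1)), (0, ↑(u 2)), (0, ↑(w 0)), (0, ↑(w 1)),
      (0, ↑(w 2))] := by
    rw [hf, he]; funext i; fin_cases i <;> rfl
  obtain rfl : xi = extendedForm lam mu := funext fun v₁ => funext fun v₂ => funext (hxi v₁ v₂)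
  refine ⟨f, fun i j l hij hjl => ?_⟩
  rw [hfv, hlam]
  exact extendedForm_normalForm mu hL1iso hL2iso hlam1 hlam2 (fun i => (u i).2)
    (fun i => (w i).2) hlam2u hlam1w hs huw i j l hij hjl

/-- if `μ` is a nondegenerate 2-form on a 6-space `W̄` with a
Lagrangian decomposition `W̄ = L1 ⊕ L2` and `λ̄ = λ̄1 + λ̄2` is a 3-form adapted
to it, then the 3-form `ξ = λ̄ + w0∨ ∧ μ` on `W = k ⊕ W̄` is general:
in a suitable basis `ξ = x123 + x456 + x016 + x025 + x034`. -/
theorem stmt_11 (k : Type*) [Field k] [CharZero k] [IsAlgClosed k]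
    (Wbar : Type*) [AddCommGroup Wbar] [Module k Wbar] [FiniteDimensional k Wbar]
    (hWbar : finrank k Wbar = 6)
    (mu : AlternatingMap k Wbar k (Fin 2))
    (hmund : ∀ v : Wbar, (∀ w : Wbar, mu ![v, w] = 0) → v = 0)
    (L1 L2 : Submodule k Wbar)
    (hL12 : L1 ⊓ L2 = ⊥) (hL12' : L1 ⊔ L2 = ⊤)
    (hL1dim : finrank k L1 = 3) (hL2dim : finrank k L2 = 3)
    (hL1iso : ∀ u ∈ L1, ∀ v ∈ L1, mu ![u, v] = 0)
    (hL2iso : ∀ u ∈ L2, ∀ v ∈ L2, mu ![u, v] = 0)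
    (lam1 lam2 : AlternatingMap k Wbar k (Fin 3))
    (hlam1ne : lam1 ≠ 0) (hlam2ne : lam2 ≠ 0)
    (hlam1 : ∀ v : Fin 3 → Wbar, (∃ i, v i ∈ L1) → lam1 v = 0)
    (hlam2 : ∀ v : Fin 3 → Wbar, (∃ i, v i ∈ L2) → lam2 v = 0)
    (lam : AlternatingMap k Wbar k (Fin 3)) (hlam : lam = lam1 + lam2)
    (xi : (k × Wbar) → (k × Wbar) → (k × Wbar) → k)
    (hxi : ∀ v1 v2 v3 : k × Wbar, xi v1 v2 v3 =
      lam ![v1.2, v2.2, v3.2] + v1.1 * mu ![v2.2, v3.2] -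
        v2.1 * mu ![v1.2, v3.2] + v3.1 * mu ![v1.2, v2.2]) :
    ∃ f : Basis (Fin 7) k (k × Wbar),
      ∀ i j l : Fin 7, i < j → j < l →
        xi (f i) (f j) (f l) =
          if (i.val, j.val, l.val) = (1,2,3) ∨
             (i.val, j.val, l.val) = (4,5,6) ∨
             (i.val, j.val, l.val) = (0,1,6) ∨
             (i.val, j.val, l.val) = (0,2,5) ∨
             (i.val, j.val, l.val) = (0,3,4)
          then 1 else 0 :=
  stmt_11_general k Wbar mu hmund L1 L2 hL12 hL12' hL1dim hL2dim hL1iso hL2iso lam1 lam2 hlam1ne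
    hlam2ne hlam1 hlam2 lam hlam xi hxi
end

section
/- Let W̄ be a 6-dimensional k-vector space with a nondegenerate 2-form μ, and let λ̄ be any 3-form on W̄. Set W = k ⊕ W̄, w0 = (1,0), w0∨ : W → k the first projection, p : W → W̄ the second projection, and define the 3-form ξ on W by ξ(v1,v2,v3) = λ̄(pv1,pv2,pv3) + w0∨(v1)μ(pv2,pv3) − w0∨(v2)μ(pv1,pv3) + w0∨(v3)μ(pv1,pv2). Then for any two linearly independent vectors u', u'' ∈ W̄, the three linear forms ξ(w0,u',·), ξ(w0,u'',·), ξ(u',u'',·) on W are linearly dependent if and only if μ(u',u'') = 0 and the linear form λ̄(u',u'',·) on W̄ lies in the span of the linear forms μ(u',·) and μ(u'',·). (Degeneracy criterion from the proof of the paper's Proposition identifying D_{λ̄,μ} with the G2-adjoint variety.) -/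
open Module

/-!
For `w = (t, w̄) ∈ k ⊕ W̄` the three forms are `μ(u', w̄)`, `μ(u'', w̄)` and
`λ̄(u', u'', w̄) + t μ(u', u'')`. Nondegeneracy of `μ` makes `μ(u', ·)` and `μ(u'', ·)`
independent, so any relation among the three forms involves the third one; dividing by its
coefficient and testing on `w0` and on `W̄` gives exactly `μ(u', u'') = 0` and
`λ̄(u', u'', ·) ∈ span(μ(u', ·), μ(u'', ·))`.
-/

namespace AlternatingMap

variable {R M N : Type*} [CommSemiring R] [AddCommMonoid M] [Module R M]
  [AddCommMonoid N] [Module R N]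

def finOneToLinearMap : (M [⋀^Fin 1]→ₗ[R] N) →ₗ[R] M →ₗ[R] N where
  toFun φ :=
    { toFun := fun w => φ ![w]
      map_add' := fun x y => φ.map_vecCons_add _ x y
      map_smul' := fun c x => φ.map_vecCons_smul _ c x }
  map_add' _ _ := rfl
  map_smul' _ _ := rfl

def flat (μ : M [⋀^Fin 2]→ₗ[R] R) : M →ₗ[R] Dual R M :=
  finOneToLinearMap ∘ₗ μ.curryLeft

@[simp]
theorem flat_apply (μ : M [⋀^Fin 2]→ₗ[R] R) (u w : M) : μ.flat u w = μ ![u, w] :=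
  rfl

end AlternatingMap

section

variable {k V : Type*} [Field k] [AddCommGroup V] [Module k V]

theorem AlternatingMap.linearIndependent_flat {μ : V [⋀^Fin 2]→ₗ[k] k}
    (hμ : ∀ v : V, (∀ w : V, μ ![v, w] = 0) → v = 0) {u₁ u₂ : V}
    (hu : LinearIndependent k ![u₁, u₂]) : LinearIndependent k ![μ.flat u₁, μ.flat u₂] := by
  refine LinearIndependent.pair_iff.mpr fun s t hst => LinearIndependent.pair_iff.mp hu s t ?_
  refine hμ _ fun w => ?_
  rw [← μ.flat_apply, map_add, map_smul, map_smul, hst, LinearMap.zero_apply]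

theorem exists_nontrivial_relation_iff {f₁ f₂ : Dual k V} (hf : LinearIndependent k ![f₁, f₂])
    (g : Dual k V) (m : k) :
    (∃ c₁ c₂ c₃ : k, ¬(c₁ = 0 ∧ c₂ = 0 ∧ c₃ = 0) ∧
        ∀ v : k × V, c₁ * f₁ v.2 + c₂ * f₂ v.2 + c₃ * (g v.2 + v.1 * m) = 0) ↔
      m = 0 ∧ ∃ d₁ d₂ : k, ∀ w : V, g w = d₁ * f₁ w + d₂ * f₂ w := by
  constructor
  · rintro ⟨c₁, c₂, c₃, hne, h⟩
    have hV : ∀ w, c₁ * f₁ w + c₂ * f₂ w + c₃ * g w = 0 := fun w => by simpa using h (0, w)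
    have hm : c₃ * m = 0 := by simpa using h (1, 0)
    have hc₃ : c₃ ≠ 0 := by
      rintro rfl
      obtain ⟨hc₁, hc₂⟩ := LinearIndependent.pair_iff.mp hf c₁ c₂ <|
        LinearMap.ext fun w => by simpa using hV w
      exact hne ⟨hc₁, hc₂, rfl⟩
    refine ⟨(mul_eq_zero.mp hm).resolve_left hc₃, -c₁ / c₃, -c₂ / c₃, fun w => ?_⟩
    field_simp
    linear_combination hV w
  · rintro ⟨rfl, d₁, d₂, hg⟩
    exact ⟨-d₁, -d₂, 1, fun h => one_ne_zero h.2.2, fun v => by rw [hg]; ring⟩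

end

theorem stmt_12_general (k : Type*) [Field k]
    (Wbar : Type*) [AddCommGroup Wbar] [Module k Wbar]
    (mu : AlternatingMap k Wbar k (Fin 2))
    (hmund : ∀ v : Wbar, (∀ w : Wbar, mu ![v, w] = 0) → v = 0)
    (lam : AlternatingMap k Wbar k (Fin 3))
    (xi : (k × Wbar) → (k × Wbar) → (k × Wbar) → k)
    (hxi : ∀ v1 v2 v3 : k × Wbar, xi v1 v2 v3 =
      lam ![v1.2, v2.2, v3.2] + v1.1 * mu ![v2.2, v3.2] -
        v2.1 * mu ![v1.2, v3.2] + v3.1 * mu ![v1.2, v2.2]) :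
    ∀ u' u'' : Wbar, LinearIndependent k ![u', u''] →
      ((∃ c1 c2 c3 : k, ¬(c1 = 0 ∧ c2 = 0 ∧ c3 = 0) ∧
          ∀ v : k × Wbar,
            c1 * xi ((1 : k), (0 : Wbar)) ((0 : k), u') v +
            c2 * xi ((1 : k), (0 : Wbar)) ((0 : k), u'') v +
            c3 * xi ((0 : k), u') ((0 : k), u'') v = 0) ↔
        (mu ![u', u''] = 0 ∧
          ∃ c1 c2 : k, ∀ w : Wbar,
            lam ![u', u'', w] = c1 * mu ![u', w] + c2 * mu ![u'', w])) := by
  intro u' u'' hind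
  set g := AlternatingMap.finOneToLinearMap ((lam.curryLeft u').curryLeft u'')
  have hw₀ : ∀ (u : Wbar) (v : k × Wbar), xi (1, 0) (0, u) v = mu.flat u v.2 := by
    intro u v
    simp [hxi, lam.map_coord_zero (m := ![0, u, v.2]) 0 rfl,
      mu.map_coord_zero (m := ![0, u]) 0 rfl]
  have hg : ∀ w, g w = lam ![u', u'', w] := fun _ => rfl
  have hpair : ∀ v : k × Wbar, xi (0, u') (0, u'') v = g v.2 + v.1 * mu ![u', u''] := by
    simp [hxi, hg]
  simp only [hw₀, hpair]
  exact exists_nontrivial_relation_iff (mu.linearIndependent_flat hmund hind) g _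

/-- degeneracy criterion on `LGr_μ(2,W̄)`: for the 3-form
`ξ = λ̄ + w0∨ ∧ μ` on `W = k ⊕ W̄` and linearly independent `u', u'' ∈ W̄`, the
three linear forms `ξ(w0,u',·), ξ(w0,u'',·), ξ(u',u'',·)` on `W` are linearly
dependent iff `μ(u',u'') = 0` and `λ̄(u',u'',·)` lies in the span of `μ(u',·)`
and `μ(u'',·)`. -/
theorem stmt_12 (k : Type*) [Field k] [CharZero k]
    (Wbar : Type*) [AddCommGroup Wbar] [Module k Wbar] [FiniteDimensional k Wbar]
    (hWbar : finrank k Wbar = 6)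
    (mu : AlternatingMap k Wbar k (Fin 2))
    (hmund : ∀ v : Wbar, (∀ w : Wbar, mu ![v, w] = 0) → v = 0)
    (lam : AlternatingMap k Wbar k (Fin 3))
    (xi : (k × Wbar) → (k × Wbar) → (k × Wbar) → k)
    (hxi : ∀ v1 v2 v3 : k × Wbar, xi v1 v2 v3 =
      lam ![v1.2, v2.2, v3.2] + v1.1 * mu ![v2.2, v3.2] -
        v2.1 * mu ![v1.2, v3.2] + v3.1 * mu ![v1.2, v2.2]) :
    ∀ u' u'' : Wbar, LinearIndependent k ![u', u''] →
      ((∃ c1 c2 c3 : k, ¬(c1 = 0 ∧ c2 = 0 ∧ c3 = 0) ∧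
          ∀ v : k × Wbar,
            c1 * xi ((1 : k), (0 : Wbar)) ((0 : k), u') v +
            c2 * xi ((1 : k), (0 : Wbar)) ((0 : k), u'') v +
            c3 * xi ((0 : k), u') ((0 : k), u'') v = 0) ↔
        (mu ![u', u''] = 0 ∧
          ∃ c1 c2 : k, ∀ w : Wbar,
            lam ![u', u'', w] = c1 * mu ![u', w] + c2 * mu ![u'', w])) :=
  stmt_12_general k Wbar mu hmund lam xi hxi
end

section
/- Let W be a 7-dimensional k-vector space, ξ a 3-form on W, and w0 ∈ W a nonzero vector such that {v ∈ W : ξ(w0,v,w) = 0 for all w ∈ W} = span{w0} (i.e. the 2-form ξ(w0,·,·) has rank 6). Say a 2-dimensional subspace U2 ⊆ W is annihilated by ξ if ξ(u,u',w) = 0 for all u,u' ∈ U2 and all w ∈ W. Then: (1) no 2-dimensional subspace annihilated by ξ contains w0; (2) every 3-dimensional subspace U3 ⊆ W containing w0 contains at most one 2-dimensional subspace annihilated by ξ. (This combines the paper's Remark that points off the quadric lie on no 2-space of the adjoint variety with the claim D2(ξ̂) = ∅.) -/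
open Module

/-!
If an annihilated plane `U` contains `w₀`, then `ξ(w₀, U, ·) = 0` puts `U` inside the radical
`span {w₀}` of `ξ(w₀, ·, ·)`, so `dim U ≤ 1`. Two distinct annihilated planes `U, U'` in a
3-space containing `w₀` span it, so `w₀ = u + u'` with `u ∈ U`, `u' ∈ U'`, and then
`ξ(w₀, z, ·) = 0` for every `z` on the line `U ⊓ U'`. Hence `U ⊓ U' = span {w₀}`, so `w₀ ∈ U`,
contradicting the first part.
-/

theorem finrank_span_singleton_le_one {k W : Type*} [Field k] [AddCommGroup W] [Module k W]
    (w : W) : finrank k (Submodule.span k {w}) ≤ 1 := by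
  simpa using finrank_span_le_card ({w} : Set W)

namespace AlternatingMap

variable {k W N : Type*} [Field k] [AddCommGroup W] [Module k W] [AddCommGroup N] [Module k N]

def Annihilates (ξ : W [⋀^Fin 3]→ₗ[k] N) (U : Submodule k W) : Prop :=
  ∀ u ∈ U, ∀ u' ∈ U, ∀ w : W, ξ ![u, u', w] = 0

variable {ξ : W [⋀^Fin 3]→ₗ[k] N} {U U' : Submodule k W} {w₀ : W}

theorem Annihilates.finrank_le_one_of_mem (hU : ξ.Annihilates U) (hw₀ : w₀ ∈ U)
    (hker : ∀ v, (∀ w, ξ ![w₀, v, w] = 0) → v ∈ Submodule.span k {w₀}) :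
    finrank k U ≤ 1 :=
  calc finrank k U ≤ finrank k (Submodule.span k {w₀}) :=
        Submodule.finrank_mono fun u hu => hker u (hU w₀ hw₀ u hu)
    _ ≤ 1 := finrank_span_singleton_le_one w₀

theorem Annihilates.inf_le_span_singleton (hU : ξ.Annihilates U) (hU' : ξ.Annihilates U')
    (hw₀ : w₀ ∈ U ⊔ U')
    (hker : ∀ v, (∀ w, ξ ![w₀, v, w] = 0) → v ∈ Submodule.span k {w₀}) :
    U ⊓ U' ≤ Submodule.span k {w₀} := by
  obtain ⟨u, hu, u', hu', rfl⟩ := Submodule.mem_sup.mp hw₀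
  refine fun z hz => hker z fun w => ?_
  rw [ξ.map_vecCons_add, hU u hu z hz.1 w, hU' u' hu' z hz.2 w, add_zero]

end AlternatingMap

theorem Submodule.sup_eq_of_ne_of_finrank_eq_add_one {k W : Type*} [Field k] [AddCommGroup W]
    [Module k W] {U U' V : Submodule k W} {n : ℕ} (hU : U ≤ V) (hU' : U' ≤ V) (hne : U ≠ U')
    (hUn : finrank k U = n) (hU'n : finrank k U' = n) (hV : finrank k V = n + 1) :
    U ⊔ U' = V := by
  have : FiniteDimensional k V := Module.finite_of_finrank_eq_succ hV
  have : FiniteDimensional k U := Submodule.finiteDimensional_of_le hU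
  have hlt : U < U ⊔ U' := by
    refine lt_of_le_of_ne le_sup_left fun h => hne ?_
    exact (Submodule.eq_of_le_of_finrank_eq (h ▸ le_sup_right) (by omega)).symm
  have : FiniteDimensional k ↥(U ⊔ U') := Submodule.finiteDimensional_of_le (sup_le hU hU')
  have := Submodule.finrank_lt_finrank_of_lt hlt
  exact Submodule.eq_of_le_of_finrank_le (sup_le hU hU') (by omega)

theorem stmt_13_general (k : Type*) [Field k]
    (W : Type*) [AddCommGroup W] [Module k W]
    (xi : AlternatingMap k W k (Fin 3))
    (w0 : W)
    (hker : ∀ v : W, (∀ w : W, xi ![w0, v, w] = 0) ↔ v ∈ Submodule.span k {w0}) :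
    (∀ U2 : Submodule k W, finrank k U2 = 2 →
      (∀ u ∈ U2, ∀ u' ∈ U2, ∀ w : W, xi ![u, u', w] = 0) → w0 ∉ U2) ∧
    (∀ U3 : Submodule k W, finrank k U3 = 3 → w0 ∈ U3 →
      ∀ U2 U2' : Submodule k W,
        U2 ≤ U3 → finrank k U2 = 2 →
          (∀ u ∈ U2, ∀ u' ∈ U2, ∀ w : W, xi ![u, u', w] = 0) →
        U2' ≤ U3 → finrank k U2' = 2 →
          (∀ u ∈ U2', ∀ u' ∈ U2', ∀ w : W, xi ![u, u', w] = 0) →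
        U2 = U2') := by
  have hker' v := (hker v).mp
  have notMem (U2 : Submodule k W) (h2 : finrank k U2 = 2) (hU2 : xi.Annihilates U2) :
      w0 ∉ U2 := fun hw0 => by
    have := hU2.finrank_le_one_of_mem hw0 hker'
    omega
  refine ⟨notMem, fun U3 h3 hw0 U2 U2' hle h2 hU2 hle' h2' hU2' => ?_⟩
  by_contra hne
  have hsup : U2 ⊔ U2' = U3 :=
    Submodule.sup_eq_of_ne_of_finrank_eq_add_one hle hle' hne h2 h2' h3
  have : FiniteDimensional k U2 := Module.finite_of_finrank_eq_succ h2
  have : FiniteDimensional k U2' := Module.finite_of_finrank_eq_succ h2'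
  have hinf : finrank k ↥(U2 ⊓ U2') = 1 := by
    have := Submodule.finrank_sup_add_finrank_inf_eq U2 U2'
    rw [hsup] at this
    omega
  have hline : U2 ⊓ U2' = Submodule.span k {w0} :=
    Submodule.eq_of_le_of_finrank_le
      (AlternatingMap.Annihilates.inf_le_span_singleton hU2 hU2' (hsup ▸ hw0) hker')
      (hinf ▸ finrank_span_singleton_le_one w0)
  exact notMem U2 h2 hU2 ((hline ▸ Submodule.mem_span_singleton_self w0 : w0 ∈ U2 ⊓ U2').1)

/-- for a 3-form `ξ` on a 7-space `W` and `w0 ≠ 0` with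
`{v : ξ(w0,v,·) = 0} = span{w0}`: (1) no 2-subspace annihilated by `ξ` contains
`w0`; (2) every 3-subspace containing `w0` contains at most one 2-subspace
annihilated by `ξ`. -/
theorem stmt_13 (k : Type*) [Field k] [CharZero k]
    (W : Type*) [AddCommGroup W] [Module k W] [FiniteDimensional k W]
    (hW : finrank k W = 7)
    (xi : AlternatingMap k W k (Fin 3))
    (w0 : W) (hw0 : w0 ≠ 0)
    (hker : ∀ v : W, (∀ w : W, xi ![w0, v, w] = 0) ↔ v ∈ Submodule.span k {w0}) :
    (∀ U2 : Submodule k W, finrank k U2 = 2 →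
      (∀ u ∈ U2, ∀ u' ∈ U2, ∀ w : W, xi ![u, u', w] = 0) → w0 ∉ U2) ∧
    (∀ U3 : Submodule k W, finrank k U3 = 3 → w0 ∈ U3 →
      ∀ U2 U2' : Submodule k W,
        U2 ≤ U3 → finrank k U2 = 2 →
          (∀ u ∈ U2, ∀ u' ∈ U2, ∀ w : W, xi ![u, u', w] = 0) →
        U2' ≤ U3 → finrank k U2' = 2 →
          (∀ u ∈ U2', ∀ u' ∈ U2', ∀ w : W, xi ![u, u', w] = 0) →
        U2 = U2') :=
  stmt_13_general k W xi w0 hker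
end
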